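/- Let G be a locally compact second countable group and P ⊆ G a locally finite subset. Then the following are equivalent: (i) P has finite local complexity, i.e. P⁻¹P is closed and discrete; (ii) the orbit G·P = {gP : g ∈ G} is pre-compact in the local topology on closed subsets of G; (iii) for every compact K ⊆ G there exists a compact K' ⊆ G such that for every t ∈ G there exists t' ∈ K' with tP ∩ K = t'P ∩ K. -/

import Mathlib

/-!
Everything runs through (iii). If `tP` meets `K` at `k = tp`, then `tP ∩ K = k • (p⁻¹P ∩ k⁻¹K)`,
and `p⁻¹P ∩ k⁻¹K` is cut out of `p⁻¹P ∩ K⁻¹K ⊆ P⁻¹P ∩ K⁻¹K`. Under (i) the latter set is finite,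
so finitely many `p` realise all these patches, which gives (iii). Conversely, (iii) for
`K ∪ {1}` puts `P⁻¹P ∩ C` inside a product of two sets `P ∩ compact`, which are finite.

The closed sets agreeing on every compact set with some translate of `P` form a closed set
containing the orbit. Under (iii) it is compact: along an ultrafilter the translating elements
can be taken in a fixed compact set, so they converge to some `τ`, and the Kuratowski lower limit
of the ultrafilter agrees with `τP` on `K`. Finally (ii) gives (iii) by covering the orbit
closure with finitely many basic neighbourhoods.
-/

open Pointwise Topology Filter

variable (G : Type*) [Group G] [TopologicalSpace G] [IsTopologicalGroup G]

/-- The space `C(G)` of closed subsets of `G`. -/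
def ClosedSets := {C : Set G // IsClosed C}

/-- The local topology on `C(G)`: a set is open iff around each of its points `P` it
contains a basic neighbourhood `U_{K,V}(P) = {Q | ∃ t ∈ V, tQ ∩ K = P ∩ K}` with `K`
compact and `V` an identity neighbourhood. -/
def locTop : TopologicalSpace (ClosedSets G) where
  IsOpen S := ∀ P ∈ S, ∃ K V : Set G, IsCompact K ∧ V ∈ 𝓝 (1 : G) ∧
    {Q : ClosedSets G | ∃ t ∈ V, (t • Q.1) ∩ K = P.1 ∩ K} ⊆ S
  isOpen_univ := fun P _ =>
    ⟨∅, Set.univ, isCompact_empty, Filter.univ_mem, fun _ _ => trivial⟩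
  isOpen_inter := by
    intro S₁ S₂ h₁ h₂ P hP
    obtain ⟨K₁, V₁, hK₁, hV₁, hsub₁⟩ := h₁ P hP.1
    obtain ⟨K₂, V₂, hK₂, hV₂, hsub₂⟩ := h₂ P hP.2
    refine ⟨K₁ ∪ K₂, V₁ ∩ V₂, hK₁.union hK₂, Filter.inter_mem hV₁ hV₂, ?_⟩
    have e : ∀ (A : Set G) (K : Set G), K ⊆ K₁ ∪ K₂ →
        A ∩ (K₁ ∪ K₂) ∩ K = A ∩ K := by
      intro A K hK
      rw [Set.inter_assoc, Set.inter_eq_right.2 hK]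
    rintro Q ⟨t, htV, ht⟩
    constructor
    · exact hsub₁ ⟨t, htV.1, by
        rw [← e (t • Q.1) K₁ Set.subset_union_left, ht,
          e P.1 K₁ Set.subset_union_left]⟩
    · exact hsub₂ ⟨t, htV.2, by
        rw [← e (t • Q.1) K₂ Set.subset_union_right, ht,
          e P.1 K₂ Set.subset_union_right]⟩
  isOpen_sUnion := by
    intro 𝒮 h P hP
    obtain ⟨s, hs, hPs⟩ := hP
    obtain ⟨K, V, hK, hV, hsub⟩ := h s hs P hPs
    exact ⟨K, V, hK, hV, fun Q hQ => ⟨s, hs, hsub hQ⟩⟩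

open Set

attribute [local instance] locTop

/-- The Kuratowski lower limit of a family of sets along a filter. -/
def lowerLimit {ι X : Type*} [TopologicalSpace X] (l : Filter ι) (F : ι → Set X) : Set X :=
  {x | ∀ U ∈ 𝓝 x, ∀ᶠ i in l, (F i ∩ U).Nonempty}

theorem isClosed_lowerLimit {ι X : Type*} [TopologicalSpace X] (l : Filter ι) (F : ι → Set X) :
    IsClosed (lowerLimit l F) := by
  refine isClosed_of_closure_subset fun y hy U hU => ?_
  obtain ⟨O, hOU, hO, hyO⟩ := mem_nhds_iff.1 hU
  obtain ⟨x, hxO, hx⟩ := mem_closure_iff.1 hy O hO hyO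
  exact (hx O (hO.mem_nhds hxO)).mono fun i hi => hi.mono (inter_subset_inter_right _ hOU)

theorem smul_inter_eq_smul_inter_iff {α β : Type*} [Group α] [MulAction α β] {t : α}
    {X Y K : Set β} : t • X ∩ K = t • Y ∩ K ↔ X ∩ t⁻¹ • K = Y ∩ t⁻¹ • K := by
  conv_rhs => rw [← smul_left_cancel_iff t]
  simp only [smul_set_inter, smul_inv_smul]

theorem Set.inter_eq_inter_of_subset {α : Type*} {A B K L : Set α} (h : A ∩ L = B ∩ L)
    (hKL : K ⊆ L) : A ∩ K = B ∩ K := by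
  rw [← inter_eq_right.2 hKL, ← inter_assoc, ← inter_assoc, h]

theorem IsClosed.finite_inter_of_isDiscrete {X : Type*} [TopologicalSpace X] {S K : Set X}
    (hS : IsClosed S) (hd : IsDiscrete S) (hK : IsCompact K) : (S ∩ K).Finite :=
  (hK.inter_left hS).finite (hd.mono inter_subset_left)

theorem isClosed_and_isDiscrete_of_finite_inter {X : Type*} [TopologicalSpace X] [T1Space X]
    [WeaklyLocallyCompactSpace X] {S : Set X} (h : ∀ K, IsCompact K → (S ∩ K).Finite) :
    IsClosed S ∧ IsDiscrete S := by
  refine isClosed_and_discrete_iff.2 fun x => ?_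
  obtain ⟨M, hM, hMx⟩ := exists_compact_mem_nhds x
  have hF : ((S ∩ M) \ {x})ᶜ ∈ 𝓝 x :=
    (h M hM).sdiff.isClosed.compl_mem_nhds fun hx => hx.2 rfl
  rw [disjoint_principal_right]
  filter_upwards [nhdsWithin_le_nhds (inter_mem hMx hF), self_mem_nhdsWithin] with y hy hyx hyS
  exact hy.2 ⟨⟨hyS, hy.1⟩, hyx⟩

section

variable {G}

theorem t1Space_of_isClosed_of_isDiscrete {P : Set G} (hPc : IsClosed P) (hPd : IsDiscrete P)
    (hne : P.Nonempty) : T1Space G := by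
  obtain ⟨p, hp⟩ := hne
  have hclosed : IsClosed ({p} : Set G) := isClosed_of_closure_subset fun y hy =>
    (hPd.eq_of_specializes (specializes_iff_mem_closure.2 hy) hp
      (hPc.closure_subset_iff.2 (singleton_subset_iff.2 hp) hy)).symm
  exact IsTopologicalGroup.t1Space G (by simpa using hclosed.smul p⁻¹)

def HasCompactPatchRepresentatives (P : Set G) : Prop :=
  ∀ K : Set G, IsCompact K → ∃ K' : Set G, IsCompact K' ∧
    ∀ t : G, ∃ t' ∈ K', (t • P) ∩ K = (t' • P) ∩ K

theorem exists_compact_patch_representatives {P K : Set G} (hK : IsCompact K)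
    (hfin : ((P⁻¹ * P) ∩ (K⁻¹ * K)).Finite) :
    ∃ K' : Set G, IsCompact K' ∧ ∀ t : G, ∃ t' ∈ K', t • P ∩ K = t' • P ∩ K := by
  set f : G → Set G := fun p => p⁻¹ • P ∩ (K⁻¹ * K)
  have hf : (f '' P).Finite := hfin.finite_subsets.subset <| image_subset_iff.2 fun p hp =>
    inter_subset_inter_left _ (smul_set_subset_mul (inv_mem_inv.2 hp))
  obtain ⟨R, -, hRfin, hRf⟩ :=
    exists_subset_image_finite_and (p := fun T => T = f '' P) |>.1 ⟨_, subset_rfl, hf, rfl⟩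
  set s₀ := Classical.epsilon fun s : G => s • P ∩ K = ∅
  refine ⟨K * R⁻¹ ∪ {s₀}, (hK.mul hRfin.inv.isCompact).union isCompact_singleton, fun t => ?_⟩
  rcases (t • P ∩ K).eq_empty_or_nonempty with h | ⟨_, ⟨p, hp, rfl⟩, hk⟩
  · exact ⟨s₀, Or.inr rfl, h.trans (Classical.epsilon_spec (p := fun s : G => s • P ∩ K = ∅)
      ⟨t, h⟩).symm⟩
  obtain ⟨q, hq, hqp⟩ : f p ∈ f '' R := hRf ▸ mem_image_of_mem f hp
  obtain ⟨k, hkK, rfl⟩ : ∃ k ∈ K, t = k * p⁻¹ := ⟨t • p, hk, by simp [smul_eq_mul]⟩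
  refine ⟨k * q⁻¹, Or.inl (mul_mem_mul hkK (inv_mem_inv.2 hq)), ?_⟩
  rw [mul_smul, mul_smul, smul_inter_eq_smul_inter_iff]
  exact inter_eq_inter_of_subset hqp.symm (smul_set_subset_mul (inv_mem_inv.2 hkK))

theorem HasCompactPatchRepresentatives.finite_inv_mul_inter {P : Set G}
    (hP : ∀ K, IsCompact K → (P ∩ K).Finite) (h : HasCompactPatchRepresentatives P)
    {C : Set G} (hC : IsCompact C) : ((P⁻¹ * P) ∩ C).Finite := by
  obtain ⟨K', hK', hrep⟩ := h (insert 1 C) (hC.insert 1)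
  refine ((hP _ hK'.inv).inv.mul (hP _ (hK'.inv.mul hC))).subset ?_
  rintro _ ⟨⟨a, ha, r, hr, rfl⟩, hx⟩
  obtain ⟨t', ht', heq⟩ := hrep a
  have h1 : (1 : G) ∈ t' • P ∩ insert 1 C :=
    heq ▸ ⟨⟨a⁻¹, ha, by simp [smul_eq_mul]⟩, mem_insert _ _⟩
  have h2 : a * r ∈ t' • P ∩ insert 1 C := heq ▸ ⟨⟨r, hr, rfl⟩, mem_insert_of_mem _ hx⟩
  obtain ⟨⟨q, hq, hq1⟩, -⟩ := h1
  obtain ⟨⟨r', hr', hr'x⟩, -⟩ := h2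
  obtain rfl : q = t'⁻¹ := eq_inv_of_mul_eq_one_right hq1
  refine ⟨t', ⟨hq, inv_mem_inv.2 ht'⟩, r', ⟨hr', ?_⟩, hr'x⟩
  rw [eq_inv_mul_of_mul_eq hr'x]
  exact mul_mem_mul (inv_mem_inv.2 ht') hx

theorem isClosed_and_isDiscrete_inv_mul [LocallyCompactSpace G] {P : Set G} (hPc : IsClosed P)
    (hPd : IsDiscrete P) (h : ∀ C, IsCompact C → ((P⁻¹ * P) ∩ C).Finite) :
    IsClosed (P⁻¹ * P) ∧ IsDiscrete (P⁻¹ * P) := by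
  rcases P.eq_empty_or_nonempty with rfl | hne
  · simpa using (subsingleton_empty (α := G)).isDiscrete
  · have := t1Space_of_isClosed_of_isDiscrete hPc hPd hne
    exact isClosed_and_isDiscrete_of_finite_inter h

def patchNhd (K V : Set G) (Q : ClosedSets G) : Set (ClosedSets G) :=
  {R | ∃ t ∈ V, t • R.1 ∩ K = Q.1 ∩ K}

def translates (P : Set G) : Set (ClosedSets G) :=
  {Q | ∃ g : G, Q.1 = g • P}

def patchHull (P : Set G) : Set (ClosedSets G) :=
  {Q | ∀ K, IsCompact K → ∃ s : G, Q.1 ∩ K = s • P ∩ K}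

theorem isOpen_patchNhd_interior {N K : Set G} (hN : IsCompact N) (hK : IsCompact K)
    (Q : ClosedSets G) : IsOpen (patchNhd K (interior N) Q) := by
  refine fun R ⟨t, ht, hR⟩ => ⟨N⁻¹ * K, t⁻¹ • interior N, hN.inv.mul hK,
    (isOpen_interior.smul _).mem_nhds ⟨t, ht, inv_mul_cancel t⟩, ?_⟩
  rintro R' ⟨_, ⟨u, hu, rfl⟩, hR'⟩
  refine ⟨u, hu, ?_⟩
  calc u • R'.1 ∩ K = t • ((t⁻¹ • u) • R'.1) ∩ K := by
        rw [smul_smul, smul_eq_mul, mul_inv_cancel_left]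
    _ = t • R.1 ∩ K := smul_inter_eq_smul_inter_iff.2 <|
        inter_eq_inter_of_subset hR' (smul_set_subset_mul (inv_mem_inv.2 (interior_subset ht)))
    _ = Q.1 ∩ K := hR

theorem hasBasis_nhds_patchNhd [LocallyCompactSpace G] (Q : ClosedSets G) :
    (𝓝 Q).HasBasis (fun KV : Set G × Set G => IsCompact KV.1 ∧ KV.2 ∈ 𝓝 (1 : G))
      fun KV => patchNhd KV.1 KV.2 Q := by
  refine ⟨fun S => ⟨fun hS => ?_, ?_⟩⟩
  · obtain ⟨O, hOS, hO, hQO⟩ := mem_nhds_iff.1 hS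
    obtain ⟨K, V, hK, hV, hsub⟩ := hO Q hQO
    exact ⟨(K, V), ⟨hK, hV⟩, hsub.trans hOS⟩
  · rintro ⟨⟨K, V⟩, ⟨hK, hV⟩, hsub⟩
    obtain ⟨N, hN, hNV, hNc⟩ := local_compact_nhds hV
    have hQ : Q ∈ patchNhd K (interior N) Q := ⟨1, mem_interior_iff_mem_nhds.2 hN, by rw [one_smul]⟩
    refine mem_of_superset ((isOpen_patchNhd_interior hNc hK Q).mem_nhds hQ) ?_
    exact fun R ⟨t, ht, h⟩ => hsub ⟨t, hNV (interior_subset ht), h⟩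

theorem isClosed_patchHull (P : Set G) : IsClosed (patchHull P) := by
  refine isOpen_compl_iff.1 fun R hR => ?_
  obtain ⟨K, hK, hRK⟩ : ∃ K, IsCompact K ∧ ∀ s : G, R.1 ∩ K ≠ s • P ∩ K := by
    simpa [patchHull] using hR
  refine ⟨K, univ, hK, univ_mem, fun Q ⟨t, _, hQ⟩ hQP => ?_⟩
  obtain ⟨s, hs⟩ := hQP (t⁻¹ • K) (hK.smul _)
  exact hRK (t * s) (by rw [← hQ, mul_smul, smul_inter_eq_smul_inter_iff.2 hs])

theorem closure_translates_subset_patchHull (P : Set G) :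
    closure (translates P) ⊆ patchHull P :=
  closure_minimal (fun Q ⟨g, hg⟩ _ _ => ⟨g, by rw [hg]⟩) (isClosed_patchHull P)

theorem lowerLimit_inter_eq {ι : Type*} {l : Filter ι} [l.NeBot] {F : ι → Set G}
    {P K L : Set G} (hP : IsClosed P) (hKL : K ⊆ interior L) {φ : ι → G} {τ : G}
    (hφ : Tendsto φ l (𝓝 τ)) (hpatch : ∀ᶠ i in l, F i ∩ L = φ i • P ∩ L) :
    lowerLimit l F ∩ K = τ • P ∩ K := by
  refine Subset.antisymm (fun x ⟨hx, hxK⟩ => ⟨?_, hxK⟩) (fun x ⟨hxP, hxK⟩ => ⟨?_, hxK⟩)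
  · -- `τ⁻¹ x` is approximated by the points `(φ i)⁻¹ z ∈ P` with `z ∈ F i ∩ L` close to `x`
    rw [mem_smul_set_iff_inv_smul_mem, ← hP.closure_eq, mem_closure_iff_nhds]
    intro W hW
    have hcont : Tendsto (fun gx : G × G => gx.1⁻¹ * gx.2) (𝓝 (τ, x)) (𝓝 (τ⁻¹ * x)) :=
      (continuous_fst.inv.mul continuous_snd).tendsto _
    obtain ⟨A, hA, U, hU, hAU⟩ := mem_nhds_prod_iff.1 (hcont hW)
    obtain ⟨R, ⟨hRA, z, hzR, hzU, hzL⟩, hR⟩ :=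
      ((hφ.eventually_mem hA).and (hx _ (inter_mem hU (isOpen_interior.mem_nhds (hKL hxK))))
        |>.and hpatch).exists
    obtain ⟨p, hp, rfl⟩ : z ∈ φ R • P := (hR ▸ ⟨hzR, interior_subset hzL⟩ : z ∈ φ R • P ∩ L).1
    refine ⟨p, ?_, hp⟩
    simpa [smul_eq_mul] using hAU (mk_mem_prod hRA hzU)
  · obtain ⟨p, hp, rfl⟩ := hxP
    intro U hU
    filter_upwards [hφ.smul_const p (inter_mem hU (isOpen_interior.mem_nhds (hKL hxK))), hpatch]
      with R hRU hR
    have : φ R • p ∈ F R ∩ L := hR ▸ ⟨⟨p, hp, rfl⟩, interior_subset hRU.2⟩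
    exact ⟨_, this.1, hRU.1⟩

theorem HasCompactPatchRepresentatives.exists_lowerLimit_inter_eq [LocallyCompactSpace G]
    {P : Set G} (hP : IsClosed P) (h : HasCompactPatchRepresentatives P)
    {𝒰 : Ultrafilter (ClosedSets G)} (h𝒰 : patchHull P ∈ 𝒰) {K : Set G} (hK : IsCompact K) :
    ∃ τ : G, lowerLimit (𝒰 : Filter (ClosedSets G)) Subtype.val ∩ K = τ • P ∩ K ∧
      ∀ V ∈ 𝓝 (1 : G), ∀ᶠ R in (𝒰 : Filter (ClosedSets G)),
        ∃ t ∈ V, t • R.1 ∩ K = lowerLimit (𝒰 : Filter (ClosedSets G)) Subtype.val ∩ K := by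
  obtain ⟨N, hN, hN1⟩ := exists_compact_mem_nhds (1 : G)
  have hL : IsCompact (N⁻¹ * K) := hN.inv.mul hK
  obtain ⟨K', hK', hrep⟩ := h _ hL
  have hpatch : ∀ R ∈ patchHull P, ∃ t ∈ K', R.1 ∩ (N⁻¹ * K) = t • P ∩ (N⁻¹ * K) := by
    intro R hR
    obtain ⟨s, hs⟩ := hR _ hL
    obtain ⟨t, ht, hst⟩ := hrep s
    exact ⟨t, ht, hs.trans hst⟩
  choose! φ hφK' hφ using hpatch
  obtain ⟨τ, -, hτ⟩ := hK'.ultrafilter_le_nhds (𝒰.map φ)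
    (le_principal_iff.2 (mem_map.2 (mem_of_superset h𝒰 hφK')))
  have hKL : K ⊆ interior (N⁻¹ * K) := fun x hx => subset_interior_mul_left
    ⟨1, mem_interior_iff_mem_nhds.2 (inv_mem_nhds_one G hN1), x, hx, one_mul x⟩
  have hlim := lowerLimit_inter_eq hP hKL hτ (eventually_of_mem h𝒰 hφ)
  refine ⟨τ, hlim, fun V hV => ?_⟩
  have hshift : Tendsto (fun R => τ * (φ R)⁻¹) (𝒰 : Filter (ClosedSets G)) (𝓝 1) := by
    simpa using (tendsto_const_nhds (x := τ)).mul (Tendsto.inv hτ)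
  filter_upwards [hshift (inter_mem hV hN1), h𝒰] with R ⟨htV, htN⟩ hR
  refine ⟨_, htV, ?_⟩
  calc (τ * (φ R)⁻¹) • R.1 ∩ K = (τ * (φ R)⁻¹) • (φ R • P) ∩ K :=
        smul_inter_eq_smul_inter_iff.2 <|
          inter_eq_inter_of_subset (hφ R hR) (smul_set_subset_mul (inv_mem_inv.2 htN))
    _ = lowerLimit (𝒰 : Filter (ClosedSets G)) Subtype.val ∩ K := by
        rw [hlim, smul_smul, inv_mul_cancel_right]

theorem HasCompactPatchRepresentatives.isCompact_patchHull [LocallyCompactSpace G] {P : Set G}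
    (hP : IsClosed P) (h : HasCompactPatchRepresentatives P) : IsCompact (patchHull P) := by
  refine isCompact_iff_ultrafilter_le_nhds.2 fun 𝒰 h𝒰 => ?_
  have hlim K (hK : IsCompact K) := h.exists_lowerLimit_inter_eq hP (le_principal_iff.1 h𝒰) hK
  refine ⟨⟨_, isClosed_lowerLimit _ _⟩, fun K hK => (hlim K hK).imp fun τ h => h.1,
    (hasBasis_nhds_patchNhd _).ge_iff.2 fun KV hKV => ?_⟩
  obtain ⟨τ, -, hconv⟩ := hlim KV.1 hKV.1
  exact hconv KV.2 hKV.2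

theorem hasCompactPatchRepresentatives_of_isCompact_closure [LocallyCompactSpace G] {P : Set G}
    (hPc : IsClosed P) (hP : IsCompact (closure (translates P))) :
    HasCompactPatchRepresentatives P := by
  intro K hK
  obtain ⟨N, hN, hN1⟩ := exists_compact_mem_nhds (1 : G)
  have hNK : IsCompact (N * K) := hN.mul hK
  obtain ⟨F, hFΩ, hcover⟩ := hP.elim_nhds_subcover (fun Q => patchNhd (N * K) N Q)
    fun Q _ => (hasBasis_nhds_patchNhd Q).mem_of_mem (i := (N * K, N)) ⟨hNK, hN1⟩
  have hrep : ∀ Q ∈ F, ∃ s : G, Q.1 ∩ (N * K) = s • P ∩ (N * K) :=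
    fun Q hQ => closure_translates_subset_patchHull P (hFΩ Q hQ) _ hNK
  choose! σ hσ using hrep
  refine ⟨N⁻¹ * σ '' F, hN.inv.mul (F.finite_toSet.image σ).isCompact, fun t => ?_⟩
  have htP : (⟨t • P, hPc.smul t⟩ : ClosedSets G) ∈ closure (translates P) :=
    subset_closure (X := ClosedSets G) ⟨t, rfl⟩
  obtain ⟨Q, hQ, v, hv, hvQ⟩ := mem_iUnion₂.1 (hcover htP)
  refine ⟨v⁻¹ * σ Q, mul_mem_mul (inv_mem_inv.2 hv) (mem_image_of_mem σ hQ), ?_⟩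
  have hvK := inter_eq_inter_of_subset (hvQ.trans (hσ Q hQ)) (smul_set_subset_mul hv)
  calc t • P ∩ K = v⁻¹ • (v • t • P) ∩ K := by rw [inv_smul_smul]
    _ = v⁻¹ • (σ Q • P) ∩ K := smul_inter_eq_smul_inter_iff.2 (by rwa [inv_inv])
    _ = (v⁻¹ * σ Q) • P ∩ K := by rw [mul_smul]

end

theorem flc_tfae
    [LocallyCompactSpace G]
    (P : Set G) (hPc : IsClosed P) (hPd : DiscreteTopology ↥P) :
    ((IsClosed (P⁻¹ * P) ∧ DiscreteTopology ↥(P⁻¹ * P)) ↔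
      @IsCompact (ClosedSets G) (locTop G)
        (@closure _ (locTop G) {Q : ClosedSets G | ∃ g : G, Q.1 = g • P})) ∧
    ((IsClosed (P⁻¹ * P) ∧ DiscreteTopology ↥(P⁻¹ * P)) ↔
      ∀ K : Set G, IsCompact K → ∃ K' : Set G, IsCompact K' ∧
        ∀ t : G, ∃ t' ∈ K', (t • P) ∩ K = (t' • P) ∩ K) := by
  rw [← isDiscrete_iff_discreteTopology] at hPd ⊢
  have hPfin K (hK : IsCompact K) : (P ∩ K).Finite := hPc.finite_inter_of_isDiscrete hPd hK
  have hi_iff_iii :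
      (IsClosed (P⁻¹ * P) ∧ IsDiscrete (P⁻¹ * P)) ↔ HasCompactPatchRepresentatives P :=
    ⟨fun ⟨hc, hd⟩ K hK => exists_compact_patch_representatives hK
        (hc.finite_inter_of_isDiscrete hd (hK.inv.mul hK)),
      fun h => isClosed_and_isDiscrete_inv_mul hPc hPd fun _ => h.finite_inv_mul_inter hPfin⟩
  have hiii_ii (h : HasCompactPatchRepresentatives P) : IsCompact (closure (translates P)) :=
    (h.isCompact_patchHull hPc).of_isClosed_subset isClosed_closure
      (closure_translates_subset_patchHull P)
  exact ⟨⟨hiii_ii ∘ hi_iff_iii.1,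
    hi_iff_iii.2 ∘ hasCompactPatchRepresentatives_of_isCompact_closure hPc⟩, hi_iff_iii⟩
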